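/- Let T = {(x, y) ∈ ℝ² : x ≥ −π, y ≤ π, y ≥ x} and T' = T ∖ {(x, y) : x ≥ −π/2, y ≤ π/2, y ≥ x}. Then, modulo null sets, T' ⊆ T, T + (−2π, 2π) ⊆ 4T', and T' ∩ (T + (−2π, 2π)) is null; hence there exists a measurable set W₁ ⊆ T' ∪ (T + (−2π, 2π)) that is 2πℤ²-translation congruent to T and 2-dilation congruent to T'. Moreover, for any such W₁, letting W₂ be the image of W₁ under the reflection (x, y) ↦ (y, x), the set W₁ ∪ W₂ is a wavelet set in ℝ² for the dilation matrix 2I (the 'pine tree' wavelet set). -/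

import Mathlib

open MeasureTheory Set
open scoped Real symmDiff

noncomputable section

/-- An a.e. (modulo Lebesgue-null sets) partition of the set `A ⊆ ℝ²` by the family `P`. -/
def IsAEPartition2 {ι : Type*} (P : ι → Set (ℝ × ℝ)) (A : Set (ℝ × ℝ)) : Prop :=
  volume (A ∆ (⋃ i, P i)) = 0 ∧ ∀ i j : ι, i ≠ j → volume (P i ∩ P j) = 0

/-- `A ⊆ ℝ²` is `2πℤ²`-translation congruent to `B`. -/
def TransCongruent2 (A B : Set (ℝ × ℝ)) : Prop :=
  ∃ P : ℤ × ℤ → Set (ℝ × ℝ), (∀ m, MeasurableSet (P m)) ∧ IsAEPartition2 P A ∧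
    IsAEPartition2
      (fun (m : ℤ × ℤ) =>
        (fun p : ℝ × ℝ => (p.1 + 2 * Real.pi * (m.1 : ℝ), p.2 + 2 * Real.pi * (m.2 : ℝ)))
          '' P m) B

/-- `A ⊆ ℝ²` is `2`-dilation congruent to `B`. -/
def DilCongruent2 (A B : Set (ℝ × ℝ)) : Prop :=
  ∃ P : ℤ → Set (ℝ × ℝ), (∀ k, MeasurableSet (P k)) ∧ IsAEPartition2 P A ∧
    IsAEPartition2
      (fun (k : ℤ) =>
        (fun p : ℝ × ℝ => ((2 : ℝ) ^ k * p.1, (2 : ℝ) ^ k * p.2)) '' P k) B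

/-- `W ⊆ ℝ²` is a wavelet set for the dilation matrix `2I`: its `2πℤ²`-translates and
its `2ℤ`-dilates each partition `ℝ²` modulo Lebesgue-null sets. -/
def IsWaveletSet2 (W : Set (ℝ × ℝ)) : Prop :=
  MeasurableSet W ∧
  (∀ᵐ p : ℝ × ℝ ∂volume, ∃! m : ℤ × ℤ,
    (p.1 + 2 * Real.pi * (m.1 : ℝ), p.2 + 2 * Real.pi * (m.2 : ℝ)) ∈ W) ∧
  (∀ᵐ p : ℝ × ℝ ∂volume, ∃! k : ℤ, ((2 : ℝ) ^ k * p.1, (2 : ℝ) ^ k * p.2) ∈ W)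

/-- The half-plane triangle region `T = {(x, y) : x ≥ −π, y ≤ π, y ≥ x}`. -/
def Tset : Set (ℝ × ℝ) := {p : ℝ × ℝ | -π ≤ p.1 ∧ p.2 ≤ π ∧ p.1 ≤ p.2}

/-- `T' = T ∖ {(x, y) : x ≥ −π/2, y ≤ π/2, y ≥ x}`. -/
def Tset' : Set (ℝ × ℝ) :=
  Tset \ {p : ℝ × ℝ | -(π / 2) ≤ p.1 ∧ p.2 ≤ π / 2 ∧ p.1 ≤ p.2}

/-- The translate `T + (−2π, 2π)`. -/
def Ttrans : Set (ℝ × ℝ) := (fun p : ℝ × ℝ => (p.1 - 2 * π, p.2 + 2 * π)) '' Tset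

open scoped ENNReal

/-!
Both tiling conditions are read off the count `orbitCount a A p = #{g | a g p ∈ A}`: `A` tiles
under the action `a` iff this count is `1` a.e., and congruent sets have a.e. equal counts. As
`W₁ ⊆ T' ∪ (T + (−2π, 2π))` lies above the diagonal, `W₁` and its reflection `W₂` are a.e.
disjoint, so the counts of `W₁ ∪ W₂` are those of `T` plus its reflection, i.e. of the square
`[−π, π]²`, which tiles by `2πℤ²`, and of `T'` plus its reflection, where
`T' = {x ≤ y, π/2 < max (−x) y ≤ π}` meets the dyadic orbit of every point above the diagonal
exactly once.

`W₁` itself is `A ∪ ((T ∖ A) + (−2π, 2π))` for a measurable solution `A ⊆ T'` of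
`A = T' ∖ g⁻¹(T ∖ A)`, `g p = 4p + (2π, −2π)`: scaled by `1/4`, the translated piece becomes
`g⁻¹(T ∖ A)`, which is `T' ∖ A` up to a null set.
-/

section OrbitCount

variable {G α : Type*} [MeasurableSpace G]

def orbitCount (a : G → α → α) (A : Set α) (p : α) : ℝ≥0∞ :=
  Measure.count {g | a g p ∈ A}

variable {a : G → α → α} {A B : Set α} {p : α}

theorem orbitCount_eq_zero_iff : orbitCount a A p = 0 ↔ ∀ g, a g p ∉ A := by
  simp [orbitCount, Measure.count_eq_zero_iff, eq_empty_iff_forall_notMem]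

variable [DiscreteMeasurableSpace G]

theorem count_preimage_equiv (σ : G ≃ G) (s : Set G) :
    Measure.count (σ ⁻¹' s) = Measure.count s := by
  rw [Measure.count_apply .of_discrete, Measure.count_apply .of_discrete,
    encard_preimage_of_injective_subset_range σ.injective (by simp)]

theorem orbitCount_eq_one_iff : orbitCount a A p = 1 ↔ ∃! g, a g p ∈ A := by
  rw [orbitCount, Measure.count_apply .of_discrete, ← ENat.toENNReal_one, ENat.toENNReal_inj,
    encard_eq_one]
  simp only [eq_singleton_iff_unique_mem, ExistsUnique, mem_ofPred_eq]

theorem orbitCount_union (h : ∀ g, a g p ∉ A ∩ B) :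
    orbitCount a (A ∪ B) p = orbitCount a A p + orbitCount a B p :=
  measure_union (disjoint_left.2 fun g hA hB => h g ⟨hA, hB⟩) .of_discrete

theorem orbitCount_preimage {s : α → α} (σ : G ≃ G) (hs : ∀ g, Function.Semiconj s (a g) (a (σ g)))
    (S : Set α) (p : α) : orbitCount a (s ⁻¹' S) p = orbitCount a S (s p) := by
  rw [orbitCount, orbitCount, ← count_preimage_equiv σ {g | a g (s p) ∈ S}]
  congr 1
  ext g
  exact iff_of_eq (congrArg (· ∈ S) (hs g p))

theorem orbitCount_eq_tsum {ι : Type*} [Countable ι] {P : ι → Set α}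
    (hA : ∀ g, a g p ∉ A ∆ ⋃ i, P i) (hP : ∀ g, a g p ∉ ⋃ (i) (j) (_ : i ≠ j), P i ∩ P j) :
    orbitCount a A p = ∑' i, orbitCount a (P i) p := by
  have hsplit : {g | a g p ∈ A} = ⋃ i, {g | a g p ∈ P i} := by
    ext g
    have := hA g
    simp only [mem_symmDiff, mem_iUnion] at this
    simp only [mem_iUnion]
    tauto
  refine (congrArg Measure.count hsplit).trans
    (measure_iUnion (fun i j hij => ?_) fun _ => .of_discrete)
  exact disjoint_left.2 fun g hi hj => hP g (by simp only [mem_iUnion]; exact ⟨i, j, hij, hi, hj⟩)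

end OrbitCount

theorem IsAEPartition2.volume_overlap_null {ι : Type*} [Countable ι] {P : ι → Set (ℝ × ℝ)}
    {A : Set (ℝ × ℝ)} (h : IsAEPartition2 P A) :
    volume (⋃ (i) (j) (_ : i ≠ j), P i ∩ P j) = 0 :=
  measure_iUnion_null fun i => measure_iUnion_null fun j =>
    measure_iUnion_null fun hij => h.2 i j hij

structure IsNullPreservingAction {G : Type*} [AddGroup G] (a : G → ℝ × ℝ → ℝ × ℝ) : Prop where
  add_apply : ∀ g h p, a (g + h) p = a g (a h p)
  zero_apply : ∀ p, a 0 p = p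
  quasiMeasurePreserving : ∀ g, Measure.QuasiMeasurePreserving (a g) volume volume

namespace IsNullPreservingAction

variable {G : Type*} [AddGroup G] {a : G → ℝ × ℝ → ℝ × ℝ}

theorem neg_apply_apply (ha : IsNullPreservingAction a) (g : G) (p : ℝ × ℝ) :
    a (-g) (a g p) = p := by
  rw [← ha.add_apply, neg_add_cancel, ha.zero_apply]

theorem image_eq_preimage (ha : IsNullPreservingAction a) (g : G) (S : Set (ℝ × ℝ)) :
    a g '' S = a (-g) ⁻¹' S :=
  congrFun (image_eq_preimage_of_inverse (ha.neg_apply_apply g) fun p => by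
    simpa using ha.neg_apply_apply (-g) p) S

theorem image_zero (ha : IsNullPreservingAction a) (S : Set (ℝ × ℝ)) : a 0 '' S = S := by
  simp [ha.zero_apply]

theorem image_neg_image (ha : IsNullPreservingAction a) (g : G) (S : Set (ℝ × ℝ)) :
    a (-g) '' (a g '' S) = S := by
  simp [image_image, ha.neg_apply_apply]

theorem measurableSet_image (ha : IsNullPreservingAction a) (g : G) {S : Set (ℝ × ℝ)}
    (hS : MeasurableSet S) : MeasurableSet (a g '' S) := by
  rw [ha.image_eq_preimage]
  exact (ha.quasiMeasurePreserving _).measurable hS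

theorem volume_image_null (ha : IsNullPreservingAction a) (g : G) {N : Set (ℝ × ℝ)}
    (hN : volume N = 0) : volume (a g '' N) = 0 := by
  rw [ha.image_eq_preimage]
  exact (ha.quasiMeasurePreserving _).preimage_null hN

theorem ae_forall_notMem [Countable G] (ha : IsNullPreservingAction a) {N : Set (ℝ × ℝ)}
    (hN : volume N = 0) : ∀ᵐ p, ∀ g, a g p ∉ N :=
  ae_all_iff.2 fun g =>
    measure_eq_zero_iff_ae_notMem.1 ((ha.quasiMeasurePreserving g).preimage_null hN)

variable [MeasurableSpace G] [DiscreteMeasurableSpace G]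

theorem orbitCount_image (ha : IsNullPreservingAction a) (h : G) (S : Set (ℝ × ℝ)) (p : ℝ × ℝ) :
    orbitCount a (a h '' S) p = orbitCount a S p := by
  rw [orbitCount, orbitCount, ha.image_eq_preimage,
    ← count_preimage_equiv (Equiv.addLeft (-h)) {g | a g p ∈ S}]
  congr 1
  ext g
  simp [ha.add_apply]

theorem orbitCount_ae_eq [Countable G] (ha : IsNullPreservingAction a) {P : G → Set (ℝ × ℝ)}
    {A B : Set (ℝ × ℝ)} (hA : IsAEPartition2 P A) (hB : IsAEPartition2 (fun g => a g '' P g) B) :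
    orbitCount a A =ᵐ[volume] orbitCount a B := by
  filter_upwards [ha.ae_forall_notMem hA.1, ha.ae_forall_notMem hA.volume_overlap_null,
    ha.ae_forall_notMem hB.1, ha.ae_forall_notMem hB.volume_overlap_null] with p hA₁ hA₂ hB₁ hB₂
  rw [orbitCount_eq_tsum hA₁ hA₂, orbitCount_eq_tsum hB₁ hB₂]
  simp only [ha.orbitCount_image]

theorem ae_existsUnique_union_swap [Countable G] (ha : IsNullPreservingAction a) (σ : G ≃ G)
    (hσ : ∀ g, Function.Semiconj Prod.swap (a g) (a (σ g))) {P : G → Set (ℝ × ℝ)}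
    {W E : Set (ℝ × ℝ)} (hW : IsAEPartition2 P W) (hE : IsAEPartition2 (fun g => a g '' P g) E)
    (hWW : volume (W ∩ Prod.swap ⁻¹' W) = 0)
    (htile : ∀ᵐ p, orbitCount a E p + orbitCount a (Prod.swap ⁻¹' E) p = 1) :
    ∀ᵐ p, ∃! g, a g p ∈ W ∪ Prod.swap ⁻¹' W := by
  have hcount := ha.orbitCount_ae_eq hW hE
  have hcount_swap : ∀ᵐ p : ℝ × ℝ, orbitCount a W p.swap = orbitCount a E p.swap :=
    (Measure.measurePreserving_swap (μ := (volume : Measure ℝ)) (ν := volume)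
      ).quasiMeasurePreserving.ae hcount
  filter_upwards [hcount, hcount_swap, htile, ha.ae_forall_notMem hWW] with p h₁ h₂ h₃ h₄
  rw [← orbitCount_eq_one_iff, orbitCount_union h₄, orbitCount_preimage σ hσ, h₁, h₂,
    ← orbitCount_preimage σ hσ, h₃]

end IsNullPreservingAction

-- These unfold to the maps in `TransCongruent2`, `DilCongruent2` and `IsWaveletSet2`.
def latticeShift (m : ℤ × ℤ) (p : ℝ × ℝ) : ℝ × ℝ :=
  (p.1 + 2 * π * m.1, p.2 + 2 * π * m.2)

def dyadicScale (k : ℤ) (p : ℝ × ℝ) : ℝ × ℝ :=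
  ((2 : ℝ) ^ k * p.1, (2 : ℝ) ^ k * p.2)

theorem isNullPreservingAction_latticeShift : IsNullPreservingAction latticeShift where
  add_apply m n p := by
    simp only [latticeShift, Prod.fst_add, Prod.snd_add, Int.cast_add, Prod.mk.injEq]
    constructor <;> ring
  zero_apply p := by simp [latticeShift]
  quasiMeasurePreserving m :=
    (measurePreserving_add_right volume ((2 * π * m.1, 2 * π * m.2) : ℝ × ℝ)).quasiMeasurePreserving

theorem isNullPreservingAction_dyadicScale : IsNullPreservingAction dyadicScale where
  add_apply k l p := by
    simp only [dyadicScale, zpow_add₀ (two_ne_zero' ℝ), Prod.mk.injEq]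
    constructor <;> ring
  zero_apply p := by simp [dyadicScale]
  quasiMeasurePreserving k :=
    Measure.quasiMeasurePreserving_smul volume (zpow_ne_zero k two_ne_zero)

theorem semiconj_swap_latticeShift (m : ℤ × ℤ) :
    Function.Semiconj Prod.swap (latticeShift m) (latticeShift m.swap) := fun _ => rfl

theorem semiconj_swap_dyadicScale (k : ℤ) :
    Function.Semiconj Prod.swap (dyadicScale k) (dyadicScale k) := fun _ => rfl

theorem volume_diagonal : volume {p : ℝ × ℝ | p.1 = p.2} = 0 := by
  rw [Measure.volume_eq_prod,
    Measure.measure_prod_null (measurableSet_eq_fun measurable_fst measurable_snd)]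
  refine Filter.Eventually.of_forall fun x => ?_
  simp

theorem inter_preimage_swap_subset_diagonal {S : Set (ℝ × ℝ)} (hS : S ⊆ {p | p.1 ≤ p.2}) :
    S ∩ Prod.swap ⁻¹' S ⊆ {p | p.1 = p.2} :=
  fun _ hp => le_antisymm (hS hp.1) (hS hp.2)

theorem isWaveletSet2_union_swap {W E F : Set (ℝ × ℝ)} (hW : MeasurableSet W)
    (hWW : volume (W ∩ Prod.swap ⁻¹' W) = 0)
    (hE : ∀ᵐ p, orbitCount latticeShift E p + orbitCount latticeShift (Prod.swap ⁻¹' E) p = 1)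
    (hF : ∀ᵐ p, orbitCount dyadicScale F p + orbitCount dyadicScale (Prod.swap ⁻¹' F) p = 1)
    (hWE : TransCongruent2 W E) (hWF : DilCongruent2 W F) :
    IsWaveletSet2 (W ∪ (fun p : ℝ × ℝ => (p.2, p.1)) '' W) := by
  obtain ⟨P, -, hP, hPE⟩ := hWE
  obtain ⟨Q, -, hQ, hQF⟩ := hWF
  rw [show (fun p : ℝ × ℝ => (p.2, p.1)) = Prod.swap from rfl, image_swap_eq_preimage_swap]
  exact ⟨hW.union (hW.preimage measurable_swap),
    isNullPreservingAction_latticeShift.ae_existsUnique_union_swap (Equiv.prodComm ℤ ℤ)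
      semiconj_swap_latticeShift hP hPE hWW hE,
    isNullPreservingAction_dyadicScale.ae_existsUnique_union_swap (Equiv.refl ℤ)
      semiconj_swap_dyadicScale hQ hQF hWW hF⟩

theorem exists_measurableSet_eq_diff_preimage {α : Type*} [MeasurableSpace α] {E F : Set α}
    (hE : MeasurableSet E) (hF : MeasurableSet F) {g : α → α} (hg : Measurable g) :
    ∃ A, MeasurableSet A ∧ A = F \ g ⁻¹' (E \ A) := by
  set Φ : Set α → Set α := fun S => F \ g ⁻¹' (E \ S)
  have hΦ : Monotone Φ := fun S T hST =>
    sdiff_subset_sdiff_right (preimage_mono (sdiff_subset_sdiff_right hST))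
  refine ⟨⋃ n, Φ^[n] ∅, MeasurableSet.iUnion fun n => ?_, subset_antisymm ?_ ?_⟩
  · induction n with
    | zero => exact .empty
    | succ n ih => rw [Function.iterate_succ_apply']; exact hF.diff (hg (hE.diff ih))
  · refine iUnion_subset fun n => ?_
    cases n with
    | zero => exact empty_subset _
    | succ n => rw [Function.iterate_succ_apply']; exact hΦ (subset_iUnion (fun n => Φ^[n] ∅) n)
  · rintro p ⟨hpF, hp⟩
    by_cases hgp : g p ∈ E
    · obtain ⟨n, hn⟩ := mem_iUnion.1 (not_not.1 fun h => hp ⟨hgp, h⟩)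
      exact mem_iUnion.2 ⟨n + 1, by
        rw [Function.iterate_succ_apply']; exact ⟨hpF, fun h => h.2 hn⟩⟩
    · exact mem_iUnion.2 ⟨1, hpF, fun h => hgp h.1⟩

theorem isAEPartition2_ite {ι : Type*} [DecidableEq ι] {i j : ι} (hij : i ≠ j)
    {S T A : Set (ℝ × ℝ)} (hST : volume (S ∩ T) = 0) (hA : volume (A ∆ (S ∪ T)) = 0) :
    IsAEPartition2 (fun m => if m = i then S else if m = j then T else ∅) A := by
  refine ⟨?_, fun m n hmn => ?_⟩
  · convert hA using 3
    ext p
    simp only [mem_iUnion, mem_union]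
    constructor
    · rintro ⟨m, hm⟩
      split_ifs at hm <;> simp_all
    · rintro (hp | hp)
      · exact ⟨i, by simpa using hp⟩
      · exact ⟨j, by simpa [hij.symm] using hp⟩
  · dsimp only
    split_ifs <;> simp_all [inter_comm]

theorem congruent_of_two_pieces {G : Type*} [AddGroup G] [DecidableEq G]
    {a : G → ℝ × ℝ → ℝ × ℝ} {g h : G} (hgh : g ≠ h) {S T B : Set (ℝ × ℝ)}
    (hS : MeasurableSet S) (hT : MeasurableSet T) (hST : volume (S ∩ T) = 0)
    (hST' : volume (a g '' S ∩ a h '' T) = 0) (hB : volume (B ∆ (a g '' S ∪ a h '' T)) = 0) :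
    ∃ P : G → Set (ℝ × ℝ), (∀ m, MeasurableSet (P m)) ∧ IsAEPartition2 P (S ∪ T) ∧
      IsAEPartition2 (fun m => a m '' P m) B := by
  refine ⟨fun m => if m = g then S else if m = h then T else ∅, fun m => ?_,
    isAEPartition2_ite hgh hST (by simp), ?_⟩
  · dsimp only
    split_ifs
    exacts [hS, hT, .empty]
  · convert isAEPartition2_ite hgh hST' hB using 2 with m
    split_ifs <;> simp_all

theorem transCongruent2_union_image_sdiff {E F A : Set (ℝ × ℝ)} (hE : MeasurableSet E)
    (hA : MeasurableSet A) (hAF : A ⊆ F) {v : ℤ × ℤ} (hv : v ≠ 0) (hFE : volume (F \ E) = 0)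
    (hdisj : volume (F ∩ latticeShift v '' E) = 0) :
    TransCongruent2 (A ∪ latticeShift v '' (E \ A)) E := by
  have hT := isNullPreservingAction_latticeShift
  have hAB : volume (A ∩ latticeShift v '' (E \ A)) = 0 :=
    measure_mono_null (inter_subset_inter hAF (image_mono sdiff_subset)) hdisj
  have h := congruent_of_two_pieces (a := latticeShift) (neg_ne_zero.2 hv).symm hA
    (hT.measurableSet_image v (hE.diff hA)) hAB (B := E)
    (by rw [hT.image_zero, hT.image_neg_image, inter_sdiff_self, measure_empty])
  rw [hT.image_zero, hT.image_neg_image, union_sdiff_self] at h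
  refine h (measure_mono_null (fun p hp => ?_) hFE)
  rcases mem_symmDiff.1 hp with ⟨hpE, hp⟩ | ⟨hp, hpE⟩
  · exact absurd (Or.inr hpE) hp
  · exact ⟨hAF (hp.resolve_right hpE), hpE⟩

theorem dilCongruent2_union_image_sdiff {E F A : Set (ℝ × ℝ)} (hE : MeasurableSet E)
    (hA : MeasurableSet A) {v : ℤ × ℤ} {j : ℤ} (hj : j ≠ 0)
    (hEF : volume (latticeShift v '' E \ dyadicScale j '' F) = 0)
    (hdisj : volume (F ∩ latticeShift v '' E) = 0)
    (hAeq : A = F \ dyadicScale (-j) '' (latticeShift v '' (E \ A))) :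
    DilCongruent2 (A ∪ latticeShift v '' (E \ A)) F := by
  have hD := isNullPreservingAction_dyadicScale
  set B := latticeShift v '' (E \ A)
  have hBE : B ⊆ latticeShift v '' E := image_mono sdiff_subset
  have hAB : volume (A ∩ B) = 0 :=
    measure_mono_null (inter_subset_inter (hAeq ▸ sdiff_subset) hBE) hdisj
  have hAX : volume (A ∩ dyadicScale (-j) '' B) = 0 := by
    rw [hAeq, sdiff_inter_self, measure_empty]
  have hAXF : A ∪ dyadicScale (-j) '' B = F ∪ dyadicScale (-j) '' B := by
    rw [hAeq, sdiff_union_self]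
  have h := congruent_of_two_pieces (a := dyadicScale) (neg_ne_zero.2 hj).symm hA
    (isNullPreservingAction_latticeShift.measurableSet_image v (hE.diff hA)) hAB (B := F)
    (by rwa [hD.image_zero])
  rw [hD.image_zero, hAXF] at h
  refine h (measure_mono_null (fun p hp => ?_) (hD.volume_image_null (-j) hEF))
  rcases mem_symmDiff.1 hp with ⟨hpF, hp⟩ | ⟨hp, hpF⟩
  · exact absurd (Or.inl hpF) hp
  · obtain ⟨q, hqB, rfl⟩ := hp.resolve_left hpF
    refine ⟨q, ⟨hBE hqB, ?_⟩, rfl⟩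
    rintro ⟨f, hf, rfl⟩
    exact hpF (by rwa [hD.neg_apply_apply])

theorem exists_transCongruent2_dilCongruent2 {E F : Set (ℝ × ℝ)} (hE : MeasurableSet E)
    (hF : MeasurableSet F) {v : ℤ × ℤ} (hv : v ≠ 0) {j : ℤ} (hj : j ≠ 0)
    (hFE : volume (F \ E) = 0) (hEF : volume (latticeShift v '' E \ dyadicScale j '' F) = 0)
    (hdisj : volume (F ∩ latticeShift v '' E) = 0) :
    ∃ W, MeasurableSet W ∧ W ⊆ F ∪ latticeShift v '' E ∧ TransCongruent2 W E ∧
      DilCongruent2 W F := by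
  have hT := isNullPreservingAction_latticeShift
  have hD := isNullPreservingAction_dyadicScale
  obtain ⟨A, hA, hAeq⟩ := exists_measurableSet_eq_diff_preimage hE hF
    ((hT.quasiMeasurePreserving (-v)).measurable.comp (hD.quasiMeasurePreserving j).measurable)
  have hX : dyadicScale (-j) '' (latticeShift v '' (E \ A)) =
      (latticeShift (-v) ∘ dyadicScale j) ⁻¹' (E \ A) := by
    rw [hD.image_eq_preimage, hT.image_eq_preimage, neg_neg, preimage_comp]
  rw [← hX] at hAeq
  have hAF : A ⊆ F := hAeq ▸ sdiff_subset
  exact ⟨_, hA.union (hT.measurableSet_image v (hE.diff hA)),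
    union_subset_union hAF (image_mono sdiff_subset),
    transCongruent2_union_image_sdiff hE hA hAF hv hFE hdisj,
    dilCongruent2_union_image_sdiff hE hA hj hEF hdisj hAeq⟩

theorem ae_existsUnique_add_mem_Icc : ∀ᵐ x : ℝ, ∃! n : ℤ, x + 2 * π * n ∈ Icc (-π) π := by
  filter_upwards [measure_eq_zero_iff_ae_notMem.1
    ((countable_range fun n : ℤ => π - 2 * π * n).measure_zero volume)] with x hx
  obtain ⟨n, hn, huniq⟩ := existsUnique_add_zsmul_mem_Ico Real.two_pi_pos x (-π)
  have hcomm : ∀ m : ℤ, (m : ℝ) * (2 * π) = 2 * π * m := fun m => mul_comm _ _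
  simp only [zsmul_eq_mul, hcomm, show -π + 2 * π = π by ring] at hn huniq
  refine ⟨n, Ico_subset_Icc_self hn, fun m hm => huniq m ⟨hm.1, hm.2.lt_of_ne fun h => ?_⟩⟩
  exact hx ⟨m, by linarith⟩

def square : Set (ℝ × ℝ) := Icc (-π) π ×ˢ Icc (-π) π

theorem ae_existsUnique_latticeShift_mem_square :
    ∀ᵐ p : ℝ × ℝ, ∃! m : ℤ × ℤ, latticeShift m p ∈ square := by
  have h := ae_existsUnique_add_mem_Icc
  filter_upwards [Measure.quasiMeasurePreserving_fst.ae h, Measure.quasiMeasurePreserving_snd.ae h]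
    with p ⟨n₁, hn₁, hu₁⟩ ⟨n₂, hn₂, hu₂⟩
  exact ⟨(n₁, n₂), ⟨hn₁, hn₂⟩, fun m hm => Prod.ext (hu₁ _ hm.1) (hu₂ _ hm.2)⟩

theorem measurableSet_Tset : MeasurableSet Tset :=
  (measurableSet_le measurable_const measurable_fst).inter
    ((measurableSet_le measurable_snd measurable_const).inter
      (measurableSet_le measurable_fst measurable_snd))

theorem Tset_subset_setOf_le : Tset ⊆ {p | p.1 ≤ p.2} := fun _ hp => hp.2.2

theorem Tset_union_preimage_swap : Tset ∪ Prod.swap ⁻¹' Tset = square := by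
  ext ⟨x, y⟩
  simp only [Tset, square, mem_union, mem_preimage, mem_ofPred_eq, Prod.swap_prod_mk, mem_prod,
    mem_Icc]
  constructor
  · rintro (⟨h₁, h₂, h₃⟩ | ⟨h₁, h₂, h₃⟩) <;> refine ⟨⟨?_, ?_⟩, ?_, ?_⟩ <;> linarith
  · rintro ⟨⟨h₁, h₂⟩, h₃, h₄⟩
    rcases le_total x y with h | h
    · exact Or.inl ⟨h₁, h₄, h⟩
    · exact Or.inr ⟨h₃, h₂, h⟩

theorem ae_orbitCount_latticeShift_Tset :
    ∀ᵐ p, orbitCount latticeShift Tset p + orbitCount latticeShift (Prod.swap ⁻¹' Tset) p = 1 := by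
  filter_upwards [ae_existsUnique_latticeShift_mem_square,
    isNullPreservingAction_latticeShift.ae_forall_notMem
      (measure_mono_null (inter_preimage_swap_subset_diagonal Tset_subset_setOf_le)
        volume_diagonal)]
    with p hsquare hdiag
  rw [← orbitCount_union hdiag, Tset_union_preimage_swap, orbitCount_eq_one_iff]
  exact hsquare

theorem Tset'_subset_Tset : Tset' ⊆ Tset := sdiff_subset

theorem measurableSet_Tset' : MeasurableSet Tset' :=
  measurableSet_Tset.diff ((measurableSet_le measurable_const measurable_fst).inter
    ((measurableSet_le measurable_snd measurable_const).inter
      (measurableSet_le measurable_fst measurable_snd)))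

theorem mem_Tset'_iff {p : ℝ × ℝ} : p ∈ Tset' ↔ p.1 ≤ p.2 ∧ max (-p.1) p.2 ∈ Ioc (π / 2) π := by
  simp only [Tset', Tset, mem_sdiff, mem_ofPred_eq, mem_Ioc, lt_max_iff, max_le_iff]
  constructor
  · rintro ⟨⟨h₁, h₂, h₃⟩, h⟩
    refine ⟨h₃, ?_, by linarith, h₂⟩
    by_contra! h'
    exact h ⟨by linarith, h'.2, h₃⟩
  · rintro ⟨h₃, h, h₁, h₂⟩
    refine ⟨⟨by linarith, h₂, h₃⟩, fun ⟨h₄, h₅, _⟩ => ?_⟩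
    rcases h with h | h <;> linarith

theorem Tset'_subset_setOf_le : Tset' ⊆ {p | p.1 ≤ p.2} := fun _ hp => (mem_Tset'_iff.1 hp).1

theorem dyadicScale_mem_Tset'_iff {p : ℝ × ℝ} (hp : p.1 ≤ p.2) (k : ℤ) :
    dyadicScale k p ∈ Tset' ↔ (2 : ℝ) ^ k * max (-p.1) p.2 ∈ Ioc (π / 2) π := by
  have hk : (0 : ℝ) < 2 ^ k := zpow_pos two_pos k
  rw [mem_Tset'_iff, mul_max_of_nonneg _ _ hk.le]
  simp only [dyadicScale, ← mul_neg]
  exact and_iff_right (mul_le_mul_of_nonneg_left hp hk.le)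

theorem existsUnique_dyadicScale_mem_Tset' {p : ℝ × ℝ} (hp : p.1 < p.2) :
    ∃! k : ℤ, dyadicScale k p ∈ Tset' := by
  set r := max (-p.1) p.2
  have hr : 0 < r := by
    rcases le_or_gt p.2 0 with h | h
    · exact lt_max_of_lt_left (by linarith)
    · exact lt_max_of_lt_right h
  have hπr : 0 < π / r := div_pos Real.pi_pos hr
  have key : ∀ k : ℤ, dyadicScale k p ∈ Tset' ↔ k = Int.log 2 (π / r) := by
    intro k
    have hupper : (2 : ℝ) ^ k * r ≤ π ↔ k ≤ Int.log 2 (π / r) := by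
      rw [← le_div_iff₀ hr, ← Int.zpow_le_iff_le_log one_lt_two hπr, Nat.cast_ofNat]
    have hlower : π / 2 < (2 : ℝ) ^ k * r ↔ Int.log 2 (π / r) < k + 1 := by
      rw [← Int.lt_zpow_iff_log_lt one_lt_two hπr, Nat.cast_ofNat, zpow_add_one₀ (two_ne_zero' ℝ),
        div_lt_iff₀ hr, div_lt_iff₀ two_pos, mul_right_comm]
    rw [dyadicScale_mem_Tset'_iff hp.le, mem_Ioc, hupper, hlower]
    omega
  simp_rw [key]
  exact existsUnique_eq

theorem orbitCount_dyadicScale_Tset' {p : ℝ × ℝ} (hp : p.1 < p.2) :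
    orbitCount dyadicScale Tset' p = 1 ∧ orbitCount dyadicScale Tset' p.swap = 0 :=
  ⟨orbitCount_eq_one_iff.2 (existsUnique_dyadicScale_mem_Tset' hp),
    orbitCount_eq_zero_iff.2 fun k hk => (Tset'_subset_setOf_le hk).not_gt
      (mul_lt_mul_of_pos_left hp (zpow_pos two_pos k))⟩

theorem ae_orbitCount_dyadicScale_Tset' :
    ∀ᵐ p, orbitCount dyadicScale Tset' p + orbitCount dyadicScale (Prod.swap ⁻¹' Tset') p = 1 := by
  filter_upwards [measure_eq_zero_iff_ae_notMem.1 volume_diagonal] with p hp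
  rw [orbitCount_preimage (Equiv.refl ℤ) semiconj_swap_dyadicScale]
  rcases lt_or_gt_of_ne hp with h | h
  · rw [(orbitCount_dyadicScale_Tset' h).1, (orbitCount_dyadicScale_Tset' h).2, add_zero]
  · have hswap := orbitCount_dyadicScale_Tset' (p := p.swap) h
    rw [Prod.swap_swap] at hswap
    rw [hswap.1, hswap.2, zero_add]

theorem Ttrans_eq_image_latticeShift : Ttrans = latticeShift (-1, 1) '' Tset := by
  unfold Ttrans
  congr 1
  funext p
  simp only [latticeShift, Prod.mk.injEq]
  push_cast
  constructor <;> ring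

theorem mem_Ttrans_iff {p : ℝ × ℝ} :
    p ∈ Ttrans ↔ -(3 * π) ≤ p.1 ∧ p.2 ≤ 3 * π ∧ p.1 + 4 * π ≤ p.2 := by
  rw [Ttrans_eq_image_latticeShift, isNullPreservingAction_latticeShift.image_eq_preimage]
  norm_num [latticeShift, Tset]
  constructor <;> rintro ⟨h₁, h₂, h₃⟩ <;> refine ⟨?_, ?_, ?_⟩ <;> linarith

theorem Ttrans_subset_setOf_le : Ttrans ⊆ {p | p.1 ≤ p.2} := fun p hp => by
  show p.1 ≤ p.2
  obtain ⟨-, -, h⟩ := mem_Ttrans_iff.1 hp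
  linarith [Real.pi_pos]

theorem Tset'_inter_Ttrans : Tset' ∩ Ttrans = ∅ := by
  refine eq_empty_of_forall_notMem fun p ⟨hp, hp'⟩ => ?_
  obtain ⟨⟨h₁, h₂, -⟩, -⟩ := hp
  obtain ⟨-, -, h₃⟩ := mem_Ttrans_iff.1 hp'
  linarith [Real.pi_pos]

theorem volume_Ttrans_diff_dyadicScale_Tset' : volume (Ttrans \ dyadicScale 2 '' Tset') = 0 := by
  refine measure_mono_null (fun p ⟨hp, hpT'⟩ => ?_) (measure_singleton (-(2 * π), 2 * π))
  obtain ⟨h₁, h₂, h₃⟩ := mem_Ttrans_iff.1 hp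
  rw [isNullPreservingAction_dyadicScale.image_eq_preimage, mem_preimage,
    dyadicScale_mem_Tset'_iff (by linarith [Real.pi_pos]), mem_Ioc] at hpT'
  have hmax : max (-p.1) p.2 ≤ 3 * π := max_le (by linarith) h₂
  have hpow : (2 : ℝ) ^ (-2 : ℤ) = 1 / 4 := by norm_num
  rw [hpow] at hpT'
  have h : max (-p.1) p.2 ≤ 2 * π := by
    by_contra! h
    exact hpT' ⟨by linarith, by linarith [Real.pi_pos]⟩
  rw [max_le_iff] at h
  exact Prod.ext (by linarith) (by linarith)

theorem scale_four_eq_dyadicScale_two : (fun p : ℝ × ℝ => (4 * p.1, 4 * p.2)) = dyadicScale 2 := by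
  ext p <;> norm_num [dyadicScale]

/-- Example 13 of the paper; the "pine tree" wavelet set.  Modulo
null sets, `T' ⊆ T`, `T + (−2π, 2π) ⊆ 4T'`, and `T' ∩ (T + (−2π, 2π))` is null; hence
there is a measurable `W₁ ⊆ T' ∪ (T + (−2π, 2π))` that is `2πℤ²`-translation
congruent to `T` and `2`-dilation congruent to `T'`; and for any such `W₁`, the set
`W₁ ∪ W₂`, with `W₂` the reflection of `W₁` in the line `y = x`, is a wavelet set in
`ℝ²` for dilation `2I`. -/
theorem stmt_19 :
    volume (Tset' \ Tset) = 0 ∧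
    volume (Ttrans \ ((fun p : ℝ × ℝ => (4 * p.1, 4 * p.2)) '' Tset')) = 0 ∧
    volume (Tset' ∩ Ttrans) = 0 ∧
    (∃ W₁ : Set (ℝ × ℝ), MeasurableSet W₁ ∧ W₁ ⊆ Tset' ∪ Ttrans ∧
      TransCongruent2 W₁ Tset ∧ DilCongruent2 W₁ Tset') ∧
    (∀ W₁ : Set (ℝ × ℝ), MeasurableSet W₁ → W₁ ⊆ Tset' ∪ Ttrans →
      TransCongruent2 W₁ Tset → DilCongruent2 W₁ Tset' →
      IsWaveletSet2 (W₁ ∪ (fun p : ℝ × ℝ => (p.2, p.1)) '' W₁)) := by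
  have hsub : volume (Tset' \ Tset) = 0 := by rw [sdiff_eq_empty.2 Tset'_subset_Tset, measure_empty]
  have hscale := volume_Ttrans_diff_dyadicScale_Tset'
  have hdisj : volume (Tset' ∩ Ttrans) = 0 := by rw [Tset'_inter_Ttrans, measure_empty]
  refine ⟨hsub, scale_four_eq_dyadicScale_two ▸ hscale, hdisj, ?_,
    fun W hW hWsub hWT hWT' => ?_⟩
  · rw [Ttrans_eq_image_latticeShift] at hscale hdisj ⊢
    exact exists_transCongruent2_dilCongruent2 measurableSet_Tset measurableSet_Tset'
      (by decide) (by decide) hsub hscale hdisj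
  · have hWabove : W ⊆ {p | p.1 ≤ p.2} :=
      hWsub.trans (union_subset Tset'_subset_setOf_le Ttrans_subset_setOf_le)
    exact isWaveletSet2_union_swap hW
      (measure_mono_null (inter_preimage_swap_subset_diagonal hWabove) volume_diagonal)
      ae_orbitCount_latticeShift_Tset ae_orbitCount_dyadicScale_Tset' hWT hWT'
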